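/- Let S be an AG-groupoid with left identity and let f and k be fuzzy left ideals of S. Then for any fuzzy subsets g and h of S, f∘g = h∘k implies g∘f = k∘h. -/

import Mathlib

open unitInterval

instance : Fact ((0:ℝ) ≤ 1) := ⟨zero_le_one⟩

/-- Convolution product of fuzzy subsets: (f∘g)(x) = sup over x = y*z of min (f y) (g z),
with value 0 (= ⊥) if x has no factorization. -/
noncomputable def conv {S : Type*} [Mul S] (f g : S → I) : S → I :=
  fun x => ⨆ p : {p : S × S // p.1 * p.2 = x}, f p.1.1 ⊓ g p.1.2

/-!
Proof idea: the characteristic function `χ` of `{e}` is a left identity for `∘`, and the left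
invertive law `(f∘g)∘h = (h∘g)∘f` lifts from `S` to fuzzy subsets. Hence
`g∘f = (χ∘g)∘f = (f∘g)∘χ = (h∘k)∘χ = (χ∘k)∘h = k∘h`.
-/

section Conv

variable {S : Type*} [Mul S]

lemma le_conv_mul (f g : S → I) (y z : S) : f y ⊓ g z ≤ conv f g (y * z) :=
  le_iSup (fun p : {p : S × S // p.1 * p.2 = y * z} => f p.1.1 ⊓ g p.1.2) ⟨(y, z), rfl⟩

lemma conv_le {f g : S → I} {x : S} {c : I} (h : ∀ y z, y * z = x → f y ⊓ g z ≤ c) :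
    conv f g x ≤ c :=
  iSup_le fun ⟨⟨y, z⟩, hyz⟩ => h y z hyz

lemma conv_conv_le {f g h : S → I} {x : S} {c : I}
    (hle : ∀ a b d, (a * b) * d = x → f a ⊓ g b ⊓ h d ≤ c) : conv (conv f g) h x ≤ c := by
  refine conv_le fun u d hud => ?_
  rw [conv, iSup_inf_eq]
  exact iSup_le fun ⟨⟨a, b⟩, hab⟩ => hle a b d (hab ▸ hud)

lemma conv_conv_le_conv_conv_of_left_invertive (hli : ∀ a b c : S, (a * b) * c = (c * b) * a)
    (f g h : S → I) (x : S) : conv (conv f g) h x ≤ conv (conv h g) f x :=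
  conv_conv_le fun a b d hx =>
    calc f a ⊓ g b ⊓ h d = h d ⊓ g b ⊓ f a := by ac_rfl
      _ ≤ conv h g (d * b) ⊓ f a := inf_le_inf_right _ (le_conv_mul h g d b)
      _ ≤ conv (conv h g) f x := by rw [← hx, hli]; exact le_conv_mul _ f _ a

lemma conv_conv_of_left_invertive (hli : ∀ a b c : S, (a * b) * c = (c * b) * a)
    (f g h : S → I) : conv (conv f g) h = conv (conv h g) f :=
  funext fun x => le_antisymm (conv_conv_le_conv_conv_of_left_invertive hli f g h x)
    (conv_conv_le_conv_conv_of_left_invertive hli h g f x)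

lemma conv_indicator_singleton_of_left_identity {e : S} (he : ∀ x : S, e * x = x) (g : S → I) :
    conv (Set.indicator {e} 1) g = g := by
  funext x
  refine le_antisymm (conv_le fun y z hyz => ?_) ?_
  · by_cases hy : y = e
    · subst hy
      rw [← hyz, he]
      exact inf_le_right
    · rw [Set.indicator_of_notMem (Set.notMem_singleton_iff.mpr hy)]
      exact inf_le_left.trans nonneg'
  · calc g x = Set.indicator {e} 1 e ⊓ g x := by simp [le_one' (t := g x)]
      _ ≤ conv (Set.indicator {e} 1) g (e * x) := le_conv_mul _ g e x
      _ = conv (Set.indicator {e} 1) g x := by rw [he]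

end Conv

theorem stmt9_general {S : Type*} [Mul S]
    (hli : ∀ a b c : S, (a * b) * c = (c * b) * a)
    (e : S) (he : ∀ x : S, e * x = x)
    (f k : S → I)
    (g h : S → I) (heq : conv f g = conv h k) :
    conv g f = conv k h := by
  have hχ := conv_indicator_singleton_of_left_identity he
  calc conv g f = conv (conv (Set.indicator {e} 1) g) f := by rw [hχ]
    _ = conv (conv f g) (Set.indicator {e} 1) := conv_conv_of_left_invertive hli _ g f
    _ = conv (conv h k) (Set.indicator {e} 1) := by rw [heq]
    _ = conv (conv (Set.indicator {e} 1) k) h := conv_conv_of_left_invertive hli h k _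
    _ = conv k h := by rw [hχ]

theorem stmt9 {S : Type*} [Mul S]
    (hli : ∀ a b c : S, (a * b) * c = (c * b) * a)
    (e : S) (he : ∀ x : S, e * x = x)
    (f k : S → I) (hf : ∀ a b : S, f b ≤ f (a * b)) (hk : ∀ a b : S, k b ≤ k (a * b))
    (g h : S → I) (heq : conv f g = conv h k) :
    conv g f = conv k h :=
  stmt9_general hli e he f k g h heq
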